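/- arXiv:1508.02410 — 3 statements merged into one kernel-verified Lean document; each statement's English description precedes it below -/
import Mathlib

section
/- In a category with a distinguished class of morphisms called fibrations, define an acyclic cofibration to be a morphism with the left lifting property against all fibrations. Then if g : B → C and g ∘ f : A → C are both acyclic cofibrations, so is f : A → B. -/
open CategoryTheory CategoryTheory.Limits

/-- An acyclic cofibration: a morphism with the left lifting property against
all fibrations. -/
def AcyclicCofib {C : Type*} [Category C] (Fib : MorphismProperty C)
    {A B : C} (i : A ⟶ B) : Prop :=
  ∀ {X Y : C} (p : X ⟶ Y), Fib p → HasLiftingProperty i p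

/-- von Glehn's lemma: in a category with a terminal object in
which every morphism to the terminal object is a fibration, if `g` and `g ∘ f`
are acyclic cofibrations, so is `f`. -/
theorem stmt4 {C : Type*} [Category C] [HasTerminal C]
    (Fib : MorphismProperty C)
    (hterm : ∀ X : C, Fib (terminal.from X))
    {A B Z : C} (f : A ⟶ B) (g : B ⟶ Z)
    (hg : AcyclicCofib Fib g) (hgf : AcyclicCofib Fib (f ≫ g)) :
    AcyclicCofib Fib f := by
  intro X Y p hp
  haveI := hg (terminal.from B) (hterm B)
  have sq2 : CommSq (𝟙 B) g (terminal.from B) (terminal.from Z) :=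
    ⟨by apply Subsingleton.elim⟩
  have hr : g ≫ sq2.lift = 𝟙 B := sq2.fac_left
  constructor
  intro u v sq
  haveI := hgf p hp
  have sq3 : CommSq u (f ≫ g) p (sq2.lift ≫ v) := ⟨by
    rw [sq.w]
    simp only [Category.assoc, ← Category.assoc g, hr, Category.id_comp]⟩
  exact ⟨⟨⟨g ≫ sq3.lift,
    by rw [← Category.assoc, sq3.fac_left],
    by rw [Category.assoc, sq3.fac_right, ← Category.assoc, hr, Category.id_comp]⟩⟩⟩
end

section
/- In a type-theoretic fibration category, in the situation of two pullback squares: given g : B → C and g ∘ i : A → C fibrations, i : A → B an acyclic cofibration, p : Z → C any morphism, and X, Y the pullbacks of A and B along p (so that j : X → Y is the induced map over i), the map j is an acyclic cofibration. -/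
open CategoryTheory CategoryTheory.Limits

/-- in a type-theoretic fibration category, given two pullback
squares over `i : A ⟶ B` and `g : B ⟶ C` with `g` and `i ≫ g` fibrations and
`i` an acyclic cofibration, the induced map `j` between the pullbacks along
`p : Z ⟶ C` is an acyclic cofibration. -/
theorem stmt5 {C : Type*} [Category C] [HasTerminal C]
    (Fib : MorphismProperty C)
    -- fibrations contain the isomorphisms and all maps to the terminal object
    (hiso : ∀ {X Y : C} (f : X ⟶ Y) [IsIso f], Fib f)
    (hterm : ∀ X : C, Fib (terminal.from X))
    -- fibrations form a subcategory
    (hcomp : ∀ {X Y Z : C} (f : X ⟶ Y) (g : Y ⟶ Z), Fib f → Fib g → Fib (f ≫ g))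
    -- pullbacks of fibrations exist and are fibrations
    (hpbex : ∀ {X Y Z : C} (f : X ⟶ Z) (g : Y ⟶ Z), Fib g → HasPullback f g)
    (hpb : ∀ {P X Y Z : C} (fst : P ⟶ X) (snd : P ⟶ Y) (f : X ⟶ Z) (g : Y ⟶ Z),
      IsPullback fst snd f g → Fib g → Fib fst)
    -- acyclic cofibrations are stable under pullback along fibrations
    (hacpb : ∀ {P X Y Z : C} (fst : P ⟶ X) (snd : P ⟶ Y) (f : X ⟶ Z) (g : Y ⟶ Z),
      IsPullback fst snd f g → AcyclicCofib Fib f → Fib g → AcyclicCofib Fib snd)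
    -- every morphism factors as an acyclic cofibration followed by a fibration
    (hfact : ∀ {X Y : C} (f : X ⟶ Y),
      ∃ (W : C) (i : X ⟶ W) (p : W ⟶ Y), AcyclicCofib Fib i ∧ Fib p ∧ i ≫ p = f)
    -- the data of the two pullback squares
    {A B Cc X Y Z : C}
    (i : A ⟶ B) (g : B ⟶ Cc) (j : X ⟶ Y) (f : Y ⟶ Z)
    (r : X ⟶ A) (q : Y ⟶ B) (p : Z ⟶ Cc)
    (hg : Fib g) (hig : Fib (i ≫ g)) (hi : AcyclicCofib Fib i)
    (hsqR : IsPullback f q p g) (hsqL : IsPullback j r q i) :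
    AcyclicCofib Fib j := by
  -- factor p as acyclic cofibration t followed by fibration s
  obtain ⟨W, t, s, ht, hs, hts⟩ := hfact p
  haveI : HasPullback s g := hpbex s g hg
  haveI : HasPullback s (i ≫ g) := hpbex s (i ≫ g) hig
  -- B' = W ×_Cc B, A' = W ×_Cc A
  set fB : pullback s g ⟶ W := pullback.fst s g with hfBdef
  set sB : pullback s g ⟶ B := pullback.snd s g with hsBdef
  set fA : pullback s (i ≫ g) ⟶ W := pullback.fst s (i ≫ g) with hfAdef
  set sA : pullback s (i ≫ g) ⟶ A := pullback.snd s (i ≫ g) with hsAdef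
  have sqB : IsPullback fB sB s g := IsPullback.of_hasPullback s g
  have sqA : IsPullback fA sA s (i ≫ g) := IsPullback.of_hasPullback s (i ≫ g)
  have hFfB : Fib fB := hpb fB sB s g sqB hg
  have hFfA : Fib fA := hpb fA sA s (i ≫ g) sqA hig
  have hFsB : Fib sB := hpb sB fB g s sqB.flip hs
  -- big pullback square : X = Z ×_Cc A
  have bigSq : IsPullback (j ≫ f) r (t ≫ s) (i ≫ g) := by
    rw [hts]; exact (IsPullback.paste_vert hsqL.flip hsqR.flip).flip
  -- the square for Y over B'
  have hsqR' : IsPullback f q (t ≫ s) g := by rw [hts]; exact hsqR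
  have sqQ := IsPullback.of_bot' hsqR' sqB
  set q' : Y ⟶ pullback s g := sqB.lift (f ≫ t) q (by rw [Category.assoc, hsqR'.w]) with hq'def
  have hq'fB : q' ≫ fB = f ≫ t := sqB.lift_fst _ _ _
  have hq'sB : q' ≫ sB = q := sqB.lift_snd _ _ _
  have hACq' : AcyclicCofib Fib q' := hacpb f q' t fB sqQ ht hFfB
  -- the square for X over A'
  have sqR' := IsPullback.of_bot' bigSq sqA
  set r' : X ⟶ pullback s (i ≫ g) :=
    sqA.lift ((j ≫ f) ≫ t) r (by rw [Category.assoc, bigSq.w]) with hr'def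
  have hr'fA : r' ≫ fA = (j ≫ f) ≫ t := sqA.lift_fst _ _ _
  have hr'sA : r' ≫ sA = r := sqA.lift_snd _ _ _
  have hACr' : AcyclicCofib Fib r' := hacpb (j ≫ f) r' t fA sqR' ht hFfA
  -- the square for A' over B'
  have sqI := IsPullback.of_bot' sqA.flip sqB.flip
  set i' : pullback s (i ≫ g) ⟶ pullback s g :=
    sqB.flip.lift (sA ≫ i) fA (by rw [Category.assoc, sqA.flip.w]) with hi'def
  have hi'sB : i' ≫ sB = sA ≫ i := sqB.flip.lift_fst _ _ _
  have hi'fB : i' ≫ fB = fA := sqB.flip.lift_snd _ _ _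
  have hACi' : AcyclicCofib Fib i' := hacpb sA i' i sB sqI hi hFsB
  -- the key commutativity
  have hkey : r' ≫ i' = j ≫ q' := by
    apply sqB.hom_ext
    · rw [Category.assoc, Category.assoc, hi'fB, hr'fA, hq'fB, Category.assoc]
    · rw [Category.assoc, Category.assoc, hi'sB, hq'sB, ← Category.assoc, hr'sA, hsqL.w]
  -- conclude: j is an acyclic cofibration by cancellation
  intro U V h hFh
  constructor
  intro u v sq
  -- extend v : Y ⟶ V along the acyclic cofibration q'
  haveI := hACq' (terminal.from V) (hterm V)
  have sq1 : CommSq v q' (terminal.from V) (terminal.from (pullback s g)) :=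
    ⟨Subsingleton.elim _ _⟩
  have hv' : q' ≫ sq1.lift = v := sq1.fac_left
  -- lift against the composite acyclic cofibration r' ≫ i'
  haveI := hACr' h hFh
  haveI := hACi' h hFh
  have sq2 : CommSq u (r' ≫ i') h sq1.lift := ⟨by
    rw [hkey, Category.assoc, hv', sq.w]⟩
  have hL1 : (r' ≫ i') ≫ sq2.lift = u := sq2.fac_left
  have hL2 : sq2.lift ≫ h = sq1.lift := sq2.fac_right
  exact CommSq.HasLift.mk' ⟨q' ≫ sq2.lift, by rw [← Category.assoc, ← hkey, hL1], by
    rw [Category.assoc, hL2, hv']⟩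
end

section
/- Let I be a set with a transitive well-founded relation ≺, let Z be a category with a functor Φ : Z → I (viewing the poset (I, ⪯) as a category). Suppose F assigns to each x ∈ I and each section G_x : {y | y ≺ x} → Z of Φ (a functor with Φ ∘ G_x the inclusion) an extension of G_x to a section defined on {y | y ⪯ x}. Then there exists a unique section G : I → Z of Φ such that for every x, the restriction of G to {y | y ⪯ x} equals F(x, G restricted to {y | y ≺ x}). -/
/-!
Call a functor on a lower set `P` of `I` a recursive section if it is a section of `Φ` whose
restriction to each principal down-set `↓y ⊆ P` is `F y` applied to its restriction to `{z < y}`.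
Since `I` is thin, a functor out of a lower set is determined by its restrictions to the principal
down-sets it contains, so well-founded induction shows that a recursive section on a given lower
set is unique. Uniqueness makes the recursive sections on the `↓y` compatible, so they glue.
Existence on `↓x` is again by well-founded induction: glue those on `↓y` for `y < x` into a
recursive section on `{y < x}` and apply `F x`. Gluing once more over all of `I` gives `G`.
-/

universe w v u

open CategoryTheory ObjectProperty

instance ObjectProperty.FullSubcategory.isThin {C : Type*} [Category C] [Quiver.IsThin C]
    (P : ObjectProperty C) : Quiver.IsThin P.FullSubcategory :=
  fun _ _ => ⟨fun _ _ => ObjectProperty.hom_ext _ (Subsingleton.elim _ _)⟩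

namespace SectionRecursion

variable {I : Type u} [PartialOrder I] {Z : Type w} [Category.{v} Z]

def iicHom {x y : I} (h : x ≤ y) : (⟨x, h⟩ : FullSubcategory (· ≤ y)) ⟶ ⟨y, le_rfl⟩ :=
  homMk (homOfLE h)

theorem functor_ext_of_Iic {D : Type*} [Category D] {P : I → Prop}
    (hP : IsLowerSet {y | P y}) {B B' : FullSubcategory P ⥤ D}
    (h : ∀ y (hy : (· ≤ y) ≤ P), ιOfLE hy ⋙ B = ιOfLE hy ⋙ B') : B = B' := by
  have hIic (X : FullSubcategory P) : (· ≤ X.obj) ≤ P := fun _ hz => hP hz X.property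
  exact CategoryTheory.Functor.ext
    (fun X => Functor.congr_obj (h X.obj (hIic X)) ⟨X.obj, le_rfl⟩)
    fun X Y f => Functor.congr_hom (h Y.obj (hIic Y)) (iicHom (leOfHom f.hom))

section Glue

variable {P : I → Prop} (A : ∀ y, P y → (FullSubcategory (· ≤ y) ⥤ Z))

def IsCompatible : Prop :=
  ∀ y hy z hz (h : z ≤ y), ιOfLE (fun _ (hw : _ ≤ z) => hw.trans h) ⋙ A y hy = A z hz

variable {A}

theorem IsCompatible.obj_eq (hA : IsCompatible A) {x y : I} (hx : P x) (hy : P y) (h : x ≤ y) :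
    (A y hy).obj ⟨x, h⟩ = (A x hx).obj ⟨x, le_rfl⟩ :=
  Functor.congr_obj (hA y hy x hx h) ⟨x, le_rfl⟩

theorem IsCompatible.map_eq (hA : IsCompatible A) {x y z : I} (hy : P y) (hz : P z) (hyz : y ≤ z)
    (hx : x ≤ y) (f : (⟨x, hx⟩ : FullSubcategory (· ≤ y)) ⟶ ⟨y, le_rfl⟩) :
    (A y hy).map f = eqToHom (by rw [← hA z hz y hy hyz]; rfl) ≫
      (A z hz).map (homMk f.hom : (⟨x, hx.trans hyz⟩ : FullSubcategory (· ≤ z)) ⟶ ⟨y, hyz⟩) ≫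
      eqToHom (by rw [← hA z hz y hy hyz]; rfl) :=
  Functor.congr_hom (hA z hz y hy hyz).symm f

def glue (hA : IsCompatible A) : FullSubcategory P ⥤ Z where
  obj X := (A X.obj X.property).obj ⟨X.obj, le_rfl⟩
  map {X Y} f := eqToHom (hA.obj_eq X.property Y.property (leOfHom f.hom)).symm ≫
    (A Y.obj Y.property).map (iicHom (leOfHom f.hom))
  map_id X := by
    simp only [eqToHom_refl, Category.id_comp]
    exact (A X.obj X.property).map_id _
  map_comp {X Y W} f g := by
    rw [hA.map_eq Y.property W.property (leOfHom g.hom) (leOfHom f.hom)]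
    simp only [Category.assoc, eqToHom_trans_assoc, eqToHom_refl, Category.id_comp,
      ← Functor.map_comp]
    congr 2

theorem ιOfLE_comp_glue (hA : IsCompatible A) {y : I} (hy : (· ≤ y) ≤ P) :
    ιOfLE hy ⋙ glue hA = A y (hy y le_rfl) := by
  refine CategoryTheory.Functor.ext (fun X => (hA.obj_eq _ _ X.property).symm) fun X W f => ?_
  change eqToHom _ ≫ (A W.obj (hy W.obj W.property)).map (iicHom (leOfHom f.hom)) = _
  rw [hA.map_eq (hy W.obj W.property) (hy y le_rfl) W.property (leOfHom f.hom)]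
  simp only [eqToHom_trans_assoc]
  rfl

end Glue

section Recursion

variable (F : ∀ x : I, (FullSubcategory (· < x) ⥤ Z) → (FullSubcategory (· ≤ x) ⥤ Z))

def SatisfiesRecursion {P : I → Prop} (G : FullSubcategory P ⥤ Z) : Prop :=
  ∀ y (hy : (· ≤ y) ≤ P), ιOfLE hy ⋙ G = F y (ιOfLE (fun z (hz : z < y) => hy z hz.le) ⋙ G)

def IsRecursiveSection (Φ : Z ⥤ I) {P : I → Prop} (G : FullSubcategory P ⥤ Z) : Prop :=
  G ⋙ Φ = ι P ∧ SatisfiesRecursion F G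

variable {F}

theorem SatisfiesRecursion.ιOfLE_comp {P Q : I → Prop} (hQP : Q ≤ P) {G : FullSubcategory P ⥤ Z}
    (hG : SatisfiesRecursion F G) : SatisfiesRecursion F (ιOfLE hQP ⋙ G) :=
  fun y hy => hG y fun z hz => hQP z (hy z hz)

theorem SatisfiesRecursion.eq (hwf : WellFounded ((· < ·) : I → I → Prop)) {P : I → Prop}
    (hP : IsLowerSet {y | P y}) {G G' : FullSubcategory P ⥤ Z}
    (hG : SatisfiesRecursion F G) (hG' : SatisfiesRecursion F G') : G = G' := by
  refine functor_ext_of_Iic hP fun y => ?_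
  induction y using hwf.induction with
  | _ y ih =>
    intro hy
    rw [hG y hy, hG' y hy]
    congr 1
    exact functor_ext_of_Iic (isLowerSet_Iio y) fun z hz =>
      ih z (hz z le_rfl) fun w hw => hy w (hz w hw).le

theorem isRecursiveSection_glue {Φ : Z ⥤ I} {P : I → Prop} (hP : IsLowerSet {y | P y})
    {A : ∀ y, P y → (FullSubcategory (· ≤ y) ⥤ Z)} (hA : IsCompatible A)
    (hAF : ∀ y hy, IsRecursiveSection F Φ (A y hy)) : IsRecursiveSection F Φ (glue hA) := by
  refine ⟨functor_ext_of_Iic hP fun y hy => ?_, fun y hy => ?_⟩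
  · rw [← Functor.assoc, ιOfLE_comp_glue]
    exact (hAF y _).1
  · change _ = F y (ιOfLE (fun z (hz : z < y) => hz.le) ⋙ ιOfLE hy ⋙ glue hA)
    rw [ιOfLE_comp_glue]
    exact (hAF y _).2 y le_rfl

theorem isRecursiveSection_extend {Φ : Z ⥤ I}
    (hFsec : ∀ (x : I) (Gx : FullSubcategory (· < x) ⥤ Z),
      Gx ⋙ Φ = ι (· < x) → F x Gx ⋙ Φ = ι (· ≤ x))
    (hFres : ∀ (x : I) (Gx : FullSubcategory (· < x) ⥤ Z),
      Gx ⋙ Φ = ι (· < x) → ιOfLE (fun y (h : y < x) => le_of_lt h) ⋙ F x Gx = Gx)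
    {x : I} {G : FullSubcategory (· < x) ⥤ Z} (hG : IsRecursiveSection F Φ G) :
    IsRecursiveSection F Φ (F x G) := by
  have hres := hFres x G hG.1
  refine ⟨hFsec x G hG.1, fun y hy => ?_⟩
  rcases (hy y le_rfl).eq_or_lt with rfl | hyx
  · change F y G = F y (ιOfLE _ ⋙ F y G)
    rw [hres]
  · have hlt : (· < x) ≤ (· ≤ x) := fun z hz => hz.le
    change ιOfLE (fun z (hz : z ≤ y) => hz.trans_lt hyx) ⋙ ιOfLE hlt ⋙ F x G =
      F y (ιOfLE (fun z (hz : z < y) => hz.trans hyx) ⋙ ιOfLE hlt ⋙ F x G)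
    rw [hres]
    exact hG.2 y _

theorem exists_isRecursiveSection_of_Iic {Φ : Z ⥤ I}
    (hwf : WellFounded ((· < ·) : I → I → Prop)) {P : I → Prop} (hP : IsLowerSet {y | P y})
    (h : ∀ y, P y → ∃ G : FullSubcategory (· ≤ y) ⥤ Z, IsRecursiveSection F Φ G) :
    ∃ G : FullSubcategory P ⥤ Z, IsRecursiveSection F Φ G := by
  choose A hA using h
  have hcompat : IsCompatible A := fun y hy z hz hzy =>
    ((hA y hy).2.ιOfLE_comp _).eq hwf (isLowerSet_Iic z) (hA z hz).2
  exact ⟨glue hcompat, isRecursiveSection_glue hP hcompat hA⟩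

theorem exists_isRecursiveSection_Iic {Φ : Z ⥤ I}
    (hwf : WellFounded ((· < ·) : I → I → Prop))
    (hFsec : ∀ (x : I) (Gx : FullSubcategory (· < x) ⥤ Z),
      Gx ⋙ Φ = ι (· < x) → F x Gx ⋙ Φ = ι (· ≤ x))
    (hFres : ∀ (x : I) (Gx : FullSubcategory (· < x) ⥤ Z),
      Gx ⋙ Φ = ι (· < x) → ιOfLE (fun y (h : y < x) => le_of_lt h) ⋙ F x Gx = Gx)
    (x : I) : ∃ G : FullSubcategory (· ≤ x) ⥤ Z, IsRecursiveSection F Φ G := by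
  induction x using hwf.induction with
  | _ x ih =>
    obtain ⟨G, hG⟩ := exists_isRecursiveSection_of_Iic hwf (isLowerSet_Iio x) ih
    exact ⟨F x G, isRecursiveSection_extend hFsec hFres hG⟩

theorem isRecursiveSection_top_iff {Φ : Z ⥤ I} {G : I ⥤ Z} :
    IsRecursiveSection F Φ ((topEquivalence I).functor ⋙ G) ↔
      G ⋙ Φ = 𝟭 I ∧ ∀ x, ι (· ≤ x) ⋙ G = F x (ι (· < x) ⋙ G) := by
  refine and_congr ⟨fun h => ?_, fun h => ?_⟩ ⟨fun h x => h x le_top, fun h y _ => h y⟩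
  · exact congrArg ((topEquivalence I).inverse ⋙ ·) h
  · rw [Functor.assoc, h]
    rfl

end Recursion

end SectionRecursion

open SectionRecursion

/-- well-founded recursion for sections of a functor `Φ : Z ⥤ I`
over a well-founded poset `I`.  Given, for each `x`, an operation `F x` turning
a section of `Φ` over the strict slice `{y | y < x}` into an extension over
`{y | y ≤ x}`, there is a unique section `G : I ⥤ Z` of `Φ` whose restriction
to each `{y | y ≤ x}` is obtained by applying `F x` to its restriction to
`{y | y < x}`. -/
theorem stmt15 {I : Type u} [PartialOrder I]
    (hwf : WellFounded ((· < ·) : I → I → Prop))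
    {Z : Type w} [Category.{v} Z] (Φ : Z ⥤ I)
    (F : ∀ x : I, (ObjectProperty.FullSubcategory (· < x) ⥤ Z) → (ObjectProperty.FullSubcategory (· ≤ x) ⥤ Z))
    -- `F x` produces sections of `Φ` ...
    (hFsec : ∀ (x : I) (Gx : ObjectProperty.FullSubcategory (· < x) ⥤ Z),
      Gx ⋙ Φ = ObjectProperty.ι (· < x) →
      F x Gx ⋙ Φ = ObjectProperty.ι (· ≤ x))
    -- ... extending the given partial section
    (hFres : ∀ (x : I) (Gx : ObjectProperty.FullSubcategory (· < x) ⥤ Z),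
      Gx ⋙ Φ = ObjectProperty.ι (· < x) →
      ObjectProperty.ιOfLE (fun y (h : y < x) => le_of_lt h) ⋙ F x Gx = Gx) :
    ∃! G : I ⥤ Z, G ⋙ Φ = 𝟭 I ∧
      ∀ x : I, ObjectProperty.ι (· ≤ x) ⋙ G =
        F x (ObjectProperty.ι (· < x) ⋙ G) := by
  let e := topEquivalence I
  obtain ⟨G₀, hG₀⟩ := exists_isRecursiveSection_of_Iic (P := ⊤) hwf isLowerSet_univ
    fun y _ => exists_isRecursiveSection_Iic hwf hFsec hFres y
  refine ⟨e.inverse ⋙ G₀, isRecursiveSection_top_iff.1 hG₀, fun G hG => ?_⟩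
  have hG₀G : e.functor ⋙ G = G₀ :=
    (isRecursiveSection_top_iff.2 hG).2.eq hwf isLowerSet_univ hG₀.2
  exact congrArg (e.inverse ⋙ ·) hG₀G
end
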